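/- arXiv:2102.12016 — 5 statements merged into one kernel-verified Lean document; each statement's English description precedes it below -/
import Mathlib

section
/- Let $c_1 \in [1/2, 1]$ and define $c_2 = 2c_1/(1+\sqrt{1+2c_1})$. Suppose $\hat{m}(\hat{s}) = f_0 + g^T\hat{s} + \frac{1}{2}\hat{s}^T H \hat{s}$ is a quadratic on $\mathbb{R}^p$, and a step $\hat{s}_k$ with $\|\hat{s}_k\| \le \Delta$ satisfies the Cauchy decrease condition $\hat{m}(0) - \hat{m}(\hat{s}_k) \ge c_1 \|g\| \min(\Delta, \|g\|/\max(\|H\|,1))$. Then $\|\hat{s}_k\| \ge c_2 \min(\Delta, \|g\|/\max(\|H\|,1))$. -/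
set_option maxHeartbeats 1000000


open scoped RealInnerProductSpace

theorem stmt0 {p : ℕ} (c1 : ℝ) (hc1 : c1 ∈ Set.Icc (1/2 : ℝ) 1)
    (f0 Δ : ℝ) (hΔ : 0 < Δ)
    (g sk : EuclideanSpace ℝ (Fin p))
    (H : EuclideanSpace ℝ (Fin p) →L[ℝ] EuclideanSpace ℝ (Fin p))
    (hHsym : ∀ x y : EuclideanSpace ℝ (Fin p), ⟪H x, y⟫ = ⟪x, H y⟫)
    (m : EuclideanSpace ℝ (Fin p) → ℝ)
    (hm : ∀ s, m s = f0 + ⟪g, s⟫ + (1/2) * ⟪s, H s⟫)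
    (hsk : ‖sk‖ ≤ Δ)
    (hdec : m 0 - m sk ≥ c1 * ‖g‖ * min Δ (‖g‖ / max ‖H‖ 1)) :
    ‖sk‖ ≥ (2 * c1 / (1 + Real.sqrt (1 + 2 * c1))) * min Δ (‖g‖ / max ‖H‖ 1) := by
  obtain ⟨hc1l, hc1u⟩ := hc1
  set M := max ‖H‖ 1 with hM
  have hM1 : (1:ℝ) ≤ M := le_max_right _ _
  have hM0 : (0:ℝ) < M := lt_of_lt_of_le one_pos hM1
  set t := min Δ (‖g‖ / M) with ht
  set r := Real.sqrt (1 + 2*c1) with hr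
  have hr2 : r^2 = 1 + 2*c1 := Real.sq_sqrt (by linarith)
  have hrpos : 0 ≤ r := Real.sqrt_nonneg _
  have hr1 : 1 ≤ r := by nlinarith
  have hc2 : 2*c1/(1+r) = r - 1 := by
    rw [div_eq_iff (by linarith)]; nlinarith
  rw [hc2]
  have hkey : (r-1) + (r-1)^2/2 = c1 := by nlinarith
  have ht0 : 0 ≤ t := le_min hΔ.le (div_nonneg (norm_nonneg _) hM0.le)
  have htg : M * t ≤ ‖g‖ := by
    have h := min_le_right Δ (‖g‖ / M)
    calc M * t ≤ M * (‖g‖ / M) := by nlinarith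
    _ = ‖g‖ := by field_simp
  have h1 : m 0 - m sk = -⟪g, sk⟫ - (1/2) * ⟪sk, H sk⟫ := by
    rw [hm, hm]
    simp [inner_zero_right, inner_zero_left]
    ring
  have h2 : -⟪g, sk⟫ ≤ ‖g‖ * ‖sk‖ := by
    have := abs_real_inner_le_norm g sk
    have := neg_abs_le (⟪g, sk⟫)
    linarith
  have h3 : -⟪sk, H sk⟫ ≤ M * ‖sk‖^2 := by
    have ha : |⟪sk, H sk⟫| ≤ ‖sk‖ * ‖H sk‖ := abs_real_inner_le_norm _ _
    have hb : ‖H sk‖ ≤ ‖H‖ * ‖sk‖ := H.le_opNorm sk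
    have hc : ‖H‖ ≤ M := le_max_left _ _
    have := neg_abs_le (⟪sk, H sk⟫)
    nlinarith [norm_nonneg sk, norm_nonneg (H sk)]
  have hbound : c1 * ‖g‖ * t ≤ ‖g‖ * ‖sk‖ + (1/2) * M * ‖sk‖^2 := by
    have := hdec
    rw [h1] at this
    nlinarith
  by_contra hcon
  push_neg at hcon
  have hs0 : 0 ≤ ‖sk‖ := norm_nonneg sk
  have htpos : 0 < t := by
    by_contra h
    push_neg at h
    have : t = 0 := le_antisymm h ht0
    rw [this] at hcon
    simp at hcon
    linarith
  have hgpos : 0 < ‖g‖ := lt_of_lt_of_le (by positivity) htg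
  have ha : ‖g‖ * ‖sk‖ < ‖g‖ * ((r-1)*t) := by
    exact mul_lt_mul_of_pos_left hcon hgpos
  have hb : ‖sk‖^2 ≤ ((r-1)*t)^2 := by nlinarith
  have hb' : M * ‖sk‖^2 ≤ M * ((r-1)*t)^2 := by nlinarith
  have hmt : M * ((r-1)*t)^2 ≤ (r-1)^2 * (‖g‖ * t) := by
    have h4 : (r-1)^2 * (M * t) * t ≤ (r-1)^2 * ‖g‖ * t := by
      have := mul_le_mul_of_nonneg_right htg ht0
      nlinarith [sq_nonneg (r-1)]
    nlinarith
  have hfin : c1 * ‖g‖ * t < ((r-1) + (r-1)^2/2) * (‖g‖ * t) := by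
    nlinarith
  rw [hkey] at hfin
  nlinarith
end

section
/- For all $p \in [0,1]$ and all $x \ge 0$, the inequality $px + \log(1 - p + p e^{-x}) \le p x^2 / 2$ holds. -/
/-! Since `log y ≤ y - 1`, the left side is at most `p * (x - 1 + exp (-x))`, and
`exp (-x) ≤ 1 - x + x ^ 2 / 2` for `x ≥ 0`. -/

open Real

theorem monotone_one_sub_add_sq_div_two_sub_exp_neg :
    Monotone fun t : ℝ => 1 - t + t ^ 2 / 2 - exp (-t) := by
  refine monotone_of_hasDerivAt_nonneg (f' := fun t => exp (-t) - (1 - t)) (fun t => ?_)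
    fun t => sub_nonneg.2 (by linarith [add_one_le_exp (-t)])
  refine ((((hasDerivAt_id t).const_sub 1).add ((hasDerivAt_pow 2 t).div_const 2)).sub
    (hasDerivAt_neg t).exp).congr_deriv ?_
  norm_num
  ring

theorem exp_neg_le_one_sub_add_sq_div_two {x : ℝ} (hx : 0 ≤ x) :
    exp (-x) ≤ 1 - x + x ^ 2 / 2 := by
  have := monotone_one_sub_add_sq_div_two_sub_exp_neg hx
  norm_num at this
  linarith

theorem log_one_sub_add_mul_le {p y : ℝ} (hp : p ∈ Set.Icc (0 : ℝ) 1) (hy : 0 < y) :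
    log (1 - p + p * y) ≤ p * (y - 1) := by
  obtain ⟨hp0, hp1⟩ := hp
  have hpos : 0 < 1 - p + p * y := by
    nlinarith [mul_nonneg hp0 hy.le, mul_nonneg (sub_nonneg.2 hp1) hy.le]
  linarith [log_le_sub_one_of_pos hpos]

theorem stmt1 (p x : ℝ) (hp : p ∈ Set.Icc (0 : ℝ) 1) (hx : 0 ≤ x) :
    p * x + Real.log (1 - p + p * Real.exp (-x)) ≤ p * x ^ 2 / 2 := by
  have hlog := log_one_sub_add_mul_le hp (exp_pos (-x))
  have hexp : p * (exp (-x) - 1) ≤ p * (-x + x ^ 2 / 2) :=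
    mul_le_mul_of_nonneg_left (by linarith [exp_neg_le_one_sub_add_sq_div_two hx]) hp.1
  linarith
end

section
/- Suppose $\hat{m}: \mathbb{R}^p \to \mathbb{R}$ with $\hat{m}(\hat{s}) = f(x) + g^T\hat{s} + \frac{1}{2}\hat{s}^T H\hat{s}$ satisfies the $Q$-fully-linear error bound $|f(x + Q\hat{s}) - \hat{m}(\hat{s})| \le \kappa_{ef}\Delta^2$ for all $\|\hat{s}\| \le \Delta$, the Hessian bound $\|H\| \le \kappa_H$ with $\kappa_H \ge 1$, and the Cauchy decrease $\hat{m}(0) - \hat{m}(\hat{s}_k) \ge c_1\|g\|\min(\Delta, \|g\|/\max(\|H\|,1))$ with $\|\hat{s}_k\| \le \Delta$ and $c_1 \in [1/2,1]$. If $\Delta \le \min(1/\kappa_H,\ c_1(1-\eta_2)/(2\kappa_{ef})) \cdot \|g\|$ for some $\eta_2 \in (0,1)$, then the ratio $\rho = (f(x) - f(x + Q\hat{s}_k))/(\hat{m}(0) - \hat{m}(\hat{s}_k))$ satisfies $\rho \ge \eta_2$. -/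
open scoped RealInnerProductSpace

theorem stmt9 {n p : ℕ} (f : EuclideanSpace ℝ (Fin n) → ℝ)
    (Q : EuclideanSpace ℝ (Fin p) →L[ℝ] EuclideanSpace ℝ (Fin n))
    (x : EuclideanSpace ℝ (Fin n))
    (g sk : EuclideanSpace ℝ (Fin p))
    (H : EuclideanSpace ℝ (Fin p) →L[ℝ] EuclideanSpace ℝ (Fin p))
    (hHsym : ∀ u v : EuclideanSpace ℝ (Fin p), ⟪H u, v⟫ = ⟪u, H v⟫)
    (m : EuclideanSpace ℝ (Fin p) → ℝ)
    (hm : ∀ s, m s = f x + ⟪g, s⟫ + (1/2) * ⟪s, H s⟫)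
    (Δ κef κH c1 η2 : ℝ) (hΔ : 0 < Δ) (hκef : 0 < κef) (hκH : 1 ≤ κH)
    (hc1 : c1 ∈ Set.Icc (1/2 : ℝ) 1) (hη2 : η2 ∈ Set.Ioo (0 : ℝ) 1)
    (herr : ∀ s : EuclideanSpace ℝ (Fin p), ‖s‖ ≤ Δ → |f (x + Q s) - m s| ≤ κef * Δ ^ 2)
    (hH : ‖H‖ ≤ κH)
    (hdec : m 0 - m sk ≥ c1 * ‖g‖ * min Δ (‖g‖ / max ‖H‖ 1))
    (hsk : ‖sk‖ ≤ Δ)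
    (hΔg : Δ ≤ min (1 / κH) (c1 * (1 - η2) / (2 * κef)) * ‖g‖) :
    (f x - f (x + Q sk)) / (m 0 - m sk) ≥ η2 := by

  obtain ⟨hc1l, hc1r⟩ := hc1
  obtain ⟨hη2l, hη2r⟩ := hη2
  have hκH0 : (0:ℝ) < κH := lt_of_lt_of_le one_pos hκH
  have hm0 : m 0 = f x := by simp [hm]
  have hg : 0 < ‖g‖ := by
    rcases lt_or_eq_of_le (norm_nonneg g) with h | h
    · exact h
    · rw [← h, mul_zero] at hΔg; linarith
  have hmaxpos : (0:ℝ) < max ‖H‖ 1 := lt_of_lt_of_le one_pos (le_max_right _ _)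
  have hmax : max ‖H‖ 1 ≤ κH := max_le hH hκH
  have hΔ1 : Δ ≤ (1/κH) * ‖g‖ :=
    le_trans hΔg (mul_le_mul_of_nonneg_right (min_le_left _ _) (norm_nonneg g))
  have hΔle : Δ ≤ ‖g‖ / max ‖H‖ 1 := by
    calc Δ ≤ (1/κH) * ‖g‖ := hΔ1
      _ = ‖g‖ / κH := by ring
      _ ≤ ‖g‖ / max ‖H‖ 1 :=
        div_le_div_of_nonneg_left (norm_nonneg g) hmaxpos hmax
  have hD : m 0 - m sk ≥ c1 * ‖g‖ * Δ := by rwa [min_eq_left hΔle] at hdec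
  have hDpos : 0 < m 0 - m sk := lt_of_lt_of_le (by positivity) hD
  have herr' := herr sk hsk
  rw [abs_le] at herr'
  have hΔ2 : Δ ≤ c1 * (1 - η2) / (2 * κef) * ‖g‖ :=
    le_trans hΔg (mul_le_mul_of_nonneg_right (min_le_right _ _) (norm_nonneg g))
  have h2κef : (0:ℝ) < 2 * κef := by positivity
  have h' : Δ * (2 * κef) ≤ c1 * (1 - η2) * ‖g‖ := by
    rw [div_mul_eq_mul_div, le_div_iff₀ h2κef] at hΔ2
    exact hΔ2
  have hkey : κef * Δ ^ 2 ≤ (1 - η2) * (m 0 - m sk) := by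
    nlinarith [mul_le_mul_of_nonneg_right h' hΔ.le, hD, hg, hΔ, hη2r]
  rw [ge_iff_le, le_div_iff₀ hDpos]
  nlinarith [herr'.1, herr'.2, hkey]
end

section
/- Suppose the subspace is well-aligned with $\|Q^T\nabla f(x)\| \ge \alpha_Q\|\nabla f(x)\|$, the model gradient satisfies $\|Q^T\nabla f(x) - \hat{g}\| \le \kappa_{eg}\Delta_k$, and $\|\nabla f(x)\| \ge \epsilon$ with $\Delta_k < \alpha_Q \epsilon / (\kappa_{eg} + \mu^{-1})$ for some $\mu > 0$. Then $\|\hat{g}\| > \mu^{-1}\Delta_k$. -/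
theorem stmt11 {n p : ℕ} (f : EuclideanSpace ℝ (Fin n) → ℝ) (hf : Differentiable ℝ f)
    (Q : EuclideanSpace ℝ (Fin p) →L[ℝ] EuclideanSpace ℝ (Fin n))
    (x : EuclideanSpace ℝ (Fin n)) (ghat : EuclideanSpace ℝ (Fin p))
    (κeg μ Δk ε αQ : ℝ) (hκeg : 0 < κeg) (hμ : 0 < μ) (hΔk : 0 < Δk) (hε : 0 < ε)
    (hαQ : αQ ∈ Set.Ioo (0 : ℝ) 1)
    (halign : ‖ContinuousLinearMap.adjoint Q (gradient f x)‖ ≥ αQ * ‖gradient f x‖)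
    (hgrad : ‖ContinuousLinearMap.adjoint Q (gradient f x) - ghat‖ ≤ κeg * Δk)
    (hfx : ‖gradient f x‖ ≥ ε)
    (hΔsmall : Δk < αQ * ε / (κeg + μ⁻¹)) :
    ‖ghat‖ > μ⁻¹ * Δk := by
  have h1 : ‖ContinuousLinearMap.adjoint Q (gradient f x)‖ - ‖ghat‖ ≤ κeg * Δk :=
    le_trans (norm_sub_norm_le _ _) hgrad
  have hc : 0 < κeg + μ⁻¹ := by positivity
  have h2 : Δk * (κeg + μ⁻¹) < αQ * ε := (lt_div_iff₀ hc).mp hΔsmall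
  have h3 : αQ * ε ≤ αQ * ‖gradient f x‖ := by nlinarith [hαQ.1]
  nlinarith
end

section
/- Let $(\Delta_k)_{k=0}^{K}$ be a sequence of positive reals, $\mathcal{S} \subseteq \{0,\ldots,K\}$, and constants $0 < \gamma < 1 < \Gamma$ such that $\Delta_{k+1} \le \Gamma \Delta_k$ for $k \in \mathcal{S}$ and $\Delta_{k+1} \le \gamma\Delta_k$ for $k \notin \mathcal{S}$ (for $k < K$). Then for any $\Delta \le \Delta_0$, the number of indices $k \in \{0,\ldots,K\}\setminus\mathcal{S}$ with $\Delta_k \ge \gamma^{-1}\Delta$ is at most $\frac{\log(\Gamma)}{\log(1/\gamma)} \cdot \#\{k \in \mathcal{S} : \Delta_k \ge \Gamma^{-1}\Delta\} + \frac{\log(\Delta_0/\Delta)}{\log(1/\gamma)}$. -/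
/-!
The potential `φ k = log⁺ (Δₖ / Δ)` is nonnegative and starts at `log (Δ₀ / Δ)`. A successful
iteration with `Δₖ ≥ Γ⁻¹ Δ` raises it by at most `log Γ`, an unsuccessful one with `Δₖ ≥ γ⁻¹ Δ`
lowers it by at least `log (1 / γ)`, and any other iteration ends below `Δ`, where `φ` vanishes.
Telescoping `φ` over the iterations gives the bound.
-/

open Finset Real

theorem sum_range_le_of_potential {n : ℕ} {φ a b : ℕ → ℝ}
    (hstep : ∀ k < n, φ (k + 1) + b k ≤ φ k + a k) :
    ∑ k ∈ range n, b k ≤ φ 0 - φ n + ∑ k ∈ range n, a k := by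
  rw [← sum_range_sub', ← sum_add_distrib]
  refine sum_le_sum fun k hk => ?_
  linarith [hstep k (mem_range.mp hk)]

theorem sum_ite_const_eq_card_filter_mul {ι : Type*} (s : Finset ι) (p : ι → Prop)
    [DecidablePred p] (c : ℝ) :
    ∑ k ∈ s, (if p k then c else 0) = #(s.filter p) * c := by
  rw [← sum_filter, sum_const, nsmul_eq_mul]

theorem card_filter_mul_le_of_potential {K : ℕ} {φ : ℕ → ℝ} {p q : ℕ → Prop}
    [DecidablePred p] [DecidablePred q] {a b : ℝ} (ha : 0 ≤ a)
    (hstep : ∀ k < K, φ (k + 1) + (if q k then b else 0) ≤ φ k + if p k then a else 0)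
    (hlast : (if q K then b else 0) ≤ φ K) :
    #((range (K + 1)).filter q) * b ≤ #((range (K + 1)).filter p) * a + φ 0 := by
  have htel := sum_range_le_of_potential hstep
  have hmono : ∑ k ∈ range K, (if p k then a else 0) ≤
      ∑ k ∈ range (K + 1), (if p k then a else 0) :=
    sum_le_sum_of_subset_of_nonneg (range_subset_range.mpr K.le_succ)
      fun k _ _ => by split_ifs <;> simp [ha]
  rw [← sum_ite_const_eq_card_filter_mul, ← sum_ite_const_eq_card_filter_mul, sum_range_succ]
  linarith

theorem posLog_div_le_of_le_mul {Δ c x y : ℝ} (hΔ : 0 < Δ) (hc : 0 < c) (hy : 0 ≤ y)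
    (hyx : y ≤ c * x) :
    log⁺ (y / Δ) ≤ log⁺ (x / Δ) + if c⁻¹ * Δ ≤ x then log c else 0 := by
  have hmono : log⁺ (y / Δ) ≤ log⁺ (c * (x / Δ)) := by
    rw [← mul_div_assoc]
    exact posLog_le_posLog (by positivity) (by gcongr)
  split_ifs with hx
  · have hxΔ : 0 < x / Δ := div_pos ((by positivity : 0 < c⁻¹ * Δ).trans_le hx) hΔ
    have hone : 1 ≤ c * (x / Δ) := by
      rw [← mul_div_assoc, one_le_div hΔ, ← inv_mul_le_iff₀ hc]
      exact hx
    rw [posLog_eq_log (x := c * (x / Δ)) (by rwa [abs_of_pos (by positivity)]),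
      log_mul hc.ne' hxΔ.ne'] at hmono
    linarith [le_max_right 0 (log (x / Δ)), posLog_apply (x := x / Δ)]
  · rw [inv_mul_le_iff₀ hc, not_le] at hx
    have hsmall : |c * (x / Δ)| ≤ 1 := by
      rw [← mul_div_assoc, abs_of_nonneg (div_nonneg (hy.trans hyx) hΔ.le), div_le_one hΔ]
      exact hx.le
    rw [(posLog_eq_zero_iff (c * (x / Δ))).mpr hsmall] at hmono
    linarith [posLog_nonneg (x := x / Δ)]

theorem stmt12 (K : ℕ) (Δk : ℕ → ℝ) (hpos : ∀ k ≤ K, 0 < Δk k)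
    (S : Finset ℕ) (γ Γ : ℝ) (hγ : 0 < γ) (hγ1 : γ < 1) (hΓ : 1 < Γ)
    (hS : ∀ k < K, k ∈ S → Δk (k + 1) ≤ Γ * Δk k)
    (hU : ∀ k < K, k ∉ S → Δk (k + 1) ≤ γ * Δk k)
    (Δ : ℝ) (hΔ : 0 < Δ) (hΔ0 : Δ ≤ Δk 0) :
    ((((Finset.range (K + 1)).filter (fun k => k ∉ S ∧ γ⁻¹ * Δ ≤ Δk k)).card : ℝ)) ≤
      Real.log Γ / Real.log (1 / γ) *
        (((Finset.range (K + 1)).filter (fun k => k ∈ S ∧ Γ⁻¹ * Δ ≤ Δk k)).card : ℝ) +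
      Real.log (Δk 0 / Δ) / Real.log (1 / γ) := by
  have hL : 0 < log (1 / γ) := log_pos (by rw [one_div]; exact one_lt_inv_iff₀.mpr ⟨hγ, hγ1⟩)
  have hlogγ : log γ = -log (1 / γ) := by rw [one_div, log_inv, neg_neg]
  set φ : ℕ → ℝ := fun k => log⁺ (Δk k / Δ)
  have hstep : ∀ k < K, φ (k + 1) + (if k ∉ S ∧ γ⁻¹ * Δ ≤ Δk k then log (1 / γ) else 0) ≤
      φ k + if k ∈ S ∧ Γ⁻¹ * Δ ≤ Δk k then log Γ else 0 := by
    intro k hk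
    have hy := (hpos (k + 1) hk).le
    by_cases hkS : k ∈ S
    · simpa [hkS] using posLog_div_le_of_le_mul hΔ (by linarith) hy (hS k hk hkS)
    · have := posLog_div_le_of_le_mul hΔ hγ hy (hU k hk hkS)
      simp only [hkS, not_false_eq_true, true_and, false_and, if_false, add_zero]
      split_ifs at this ⊢ <;> linarith
  have hlast : (if K ∉ S ∧ γ⁻¹ * Δ ≤ Δk K then log (1 / γ) else 0) ≤ φ K := by
    split_ifs with hK
    · refine (log_le_log (by positivity) ?_).trans (le_max_right _ _)
      rw [le_div_iff₀ hΔ, one_div]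
      exact hK.2
    · exact posLog_nonneg
  have hφ0 : φ 0 = log (Δk 0 / Δ) := posLog_eq_log <| by
    rw [abs_of_pos (div_pos (hΔ.trans_le hΔ0) hΔ)]
    exact (one_le_div hΔ).mpr hΔ0
  have hcount := card_filter_mul_le_of_potential (log_pos hΓ).le hstep hlast
  rw [div_mul_eq_mul_div, ← add_div, le_div_iff₀ hL]
  linarith
end
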